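/- Let X and Y be partially ordered sets and let φ : X → Y be an order embedding. Suppose that for every y ∈ Y there exists a cut U of X with φ^#(U) = {z ∈ Y | z ≤ y}. Then for every cut F of Y there exists a cut A of X with φ^#(A) = F; that is, φ^# maps the set of cuts of X onto the set of cuts of Y. -/

import Mathlib

/-- `ul A = (A^u)^l`: the lower bounds of the set of upper bounds of `A`. -/
def ul {X : Type*} [PartialOrder X] (A : Set X) : Set X :=
  lowerBounds (upperBounds A)

/-- `A` is a cut if `A^{ul} = A`. -/
def IsCut {X : Type*} [PartialOrder X] (A : Set X) : Prop :=
  ul A = A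

/-- `φ^#(A) = (φ(A))^{ul}`. -/
def sharp {X Y : Type*} [PartialOrder X] [PartialOrder Y] (φ : X → Y) (A : Set X) : Set Y :=
  ul (φ '' A)

/-!
Take `A := φ⁻¹(F)`. The hypothesis says that every `y` is the supremum of the image of a cut
`U_y`, and since `φ` is an order embedding `U_y = φ⁻¹(↓y)`. Because every element of `F` is a
supremum of images of elements of `A`, the sets `φ(A)` and `F` have the same upper bounds, so
`φ^#(A) = F^{ul} = F`. Finally `A` is the intersection of the cuts `φ⁻¹(↓z)` over the upper
bounds `z` of `F`, hence itself a cut.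
-/

open Set

section Cuts

variable {X Y : Type*} [PartialOrder Y]

theorem subset_ul (A : Set Y) : A ⊆ ul A :=
  subset_lowerBounds_upperBounds A

theorem ul_mono {A B : Set Y} (h : A ⊆ B) : ul A ⊆ ul B :=
  lowerBounds_mono_set (upperBounds_mono_set h)

theorem ul_eq_Iic_iff {A : Set Y} {y : Y} : ul A = Iic y ↔ IsLUB A y := by
  constructor
  · intro h
    have hAy : A ⊆ Iic y := h ▸ subset_ul A
    have hy : y ∈ ul A := h ▸ self_mem_Iic
    exact ⟨hAy, fun b hb => hy hb⟩
  · intro h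
    rw [ul, h.upperBounds_eq, lowerBounds_Ici]

theorem IsCut.isLowerSet {F : Set Y} (hF : IsCut F) : IsLowerSet F := by
  rw [← hF]
  exact fun a b hba ha c hc => hba.trans (ha hc)

theorem eq_preimage_Iic_of_sharp_eq_Iic [PartialOrder X] {φ : X → Y} (hφ : ∀ a b : X, φ a ≤ φ b ↔ a ≤ b)
    {U : Set X} (hU : IsCut U) {y : Y} (h : sharp φ U = Iic y) : U = φ ⁻¹' Iic y := by
  refine Subset.antisymm (fun u hu => h ▸ subset_ul _ (mem_image_of_mem φ hu)) fun x hx => ?_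
  rw [← hU]
  intro w hw
  have hφw : φ w ∈ upperBounds (φ '' U) := by
    rintro _ ⟨u, hu, rfl⟩
    exact (hφ u w).2 (hw hu)
  exact (hφ x w).1 ((h.symm ▸ hx : φ x ∈ sharp φ U) hφw)

theorem upperBounds_image_preimage_eq {φ : X → Y} (hsup : ∀ y, ∃ U : Set X, IsLUB (φ '' U) y)
    {F : Set Y} (hF : IsLowerSet F) : upperBounds (φ '' (φ ⁻¹' F)) = upperBounds F := by
  refine Subset.antisymm (fun z hz f hf => ?_) (upperBounds_mono_set (image_preimage_subset φ F))
  obtain ⟨U, hU⟩ := hsup f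
  have hUF : U ⊆ φ ⁻¹' F := fun u hu => hF (hU.1 (mem_image_of_mem φ hu)) hf
  exact hU.2 (upperBounds_mono_set (image_mono hUF) hz)

theorem isCut_preimage [PartialOrder X] {φ : X → Y} (hφ : ∀ z, IsCut (φ ⁻¹' Iic z)) {F : Set Y} (hF : IsCut F) :
    IsCut (φ ⁻¹' F) := by
  refine Subset.antisymm (fun x hx => ?_) (subset_ul _)
  show φ x ∈ F
  rw [← hF]
  intro z hz
  have hFz : φ ⁻¹' F ⊆ φ ⁻¹' Iic z := preimage_mono fun f hf => hz hf
  exact (hφ z).subset (ul_mono hFz hx)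

end Cuts

theorem stmt11 {X Y : Type*} [PartialOrder X] [PartialOrder Y] (φ : X → Y)
    (hφ : ∀ a b : X, φ a ≤ φ b ↔ a ≤ b)
    (hsurj : ∀ y : Y, ∃ U : Set X, IsCut U ∧ sharp φ U = {z : Y | z ≤ y}) :
    ∀ F : Set Y, IsCut F → ∃ A : Set X, IsCut A ∧ sharp φ A = F := by
  intro F hF
  choose U hUcut hUsharp using hsurj
  have hUeq : ∀ y, U y = φ ⁻¹' Iic y := fun y =>
    eq_preimage_Iic_of_sharp_eq_Iic hφ (hUcut y) (hUsharp y)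
  have hsup : ∀ y, ∃ V : Set X, IsLUB (φ '' V) y := fun y =>
    ⟨U y, ul_eq_Iic_iff.1 (hUsharp y)⟩
  refine ⟨φ ⁻¹' F, isCut_preimage (fun z => hUeq z ▸ hUcut z) hF, ?_⟩
  rw [sharp, ul, upperBounds_image_preimage_eq hsup hF.isLowerSet]
  exact hF
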